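/- arXiv:1506.04254 — 7 statements merged into one kernel-verified Lean document; each statement's English description precedes it below -/
import Mathlib

section
/- There is a constant C = C(d) > 0 such that for every closed set E ⊆ ℝ^d, every point x ∈ ℝ^d and every t > 0, ∫_E e^{-|x-y|²/t} dy ≤ C ⟨dist(x,E)⟩^{d-1} ⟨t⟩^{d/2} e^{-dist(x,E)²/t}, where dist(x,E) is the Euclidean distance from x to E and ⟨s⟩=(1+s²)^{1/2}. -/
open MeasureTheory Set Metric Real Module

/-!
Every point of `E` lies at distance at least `D = dist(x, E)` from `x`, so the integral is at most
the Gaussian integral over the complement of the ball `B(x, D)`, which in polar coordinates is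
`|S^{d-1}| ∫_D^∞ r^{d-1} e^{-r²/t} dr`. Substituting `r = s + D` and using
`(s + D)^n ≤ 2^{n-1} (s^n + D^n)` and `e^{-(s+D)²/t} ≤ e^{-s²/t} e^{-D²/t}` reduces this to the
Gaussian moments `∫_0^∞ s^k e^{-s²/t} ds = Γ((k+1)/2) t^{(k+1)/2} / 2` for `k = 0` and `k = d - 1`,
both of which are at most a constant times `⟨t⟩^{d/2}`.
-/

section Gaussian

variable {V : Type*} [NormedAddCommGroup V] [InnerProductSpace ℝ V] [FiniteDimensional ℝ V]
  [MeasurableSpace V] [BorelSpace V]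

lemma integral_exp_neg_sq_norm_div {t : ℝ} (ht : 0 < t) :
    ∫ v : V, exp (-‖v‖ ^ 2 / t) = (π * t) ^ (finrank ℝ V / 2 : ℝ) := by
  simpa [neg_div, div_eq_inv_mul, div_inv_eq_mul, mul_comm π t] using
    GaussianFourier.integral_rexp_neg_mul_sq_norm (V := V) (inv_pos.2 ht)

lemma integrable_exp_neg_sq_norm_div {t : ℝ} (ht : 0 < t) :
    Integrable fun v : V => exp (-‖v‖ ^ 2 / t) :=
  -- a nonzero Bochner integral certifies integrability
  .of_integral_ne_zero <| by rw [integral_exp_neg_sq_norm_div ht]; positivity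

end Gaussian

lemma integral_Ioi_pow_mul_exp_neg_sq_div (k : ℕ) {t : ℝ} (ht : 0 < t) :
    ∫ s in Ioi 0, s ^ k * exp (-s ^ 2 / t) = Gamma ((k + 1) / 2) / 2 * t ^ (((k : ℝ) + 1) / 2) := by
  have h := integral_rpow_mul_exp_neg_mul_rpow two_pos
    (neg_one_lt_zero.trans_le k.cast_nonneg) (inv_pos.2 ht)
  simp only [rpow_natCast, rpow_two, inv_rpow ht.le, ← rpow_neg ht.le, neg_div, neg_neg] at h
  calc _ = ∫ s in Ioi 0, s ^ k * exp (-t⁻¹ * s ^ 2) :=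
        setIntegral_congr_fun measurableSet_Ioi fun s _ => by ring_nf
    _ = _ := by rw [h]; ring

lemma integrableOn_Ioi_pow_mul_exp_neg_sq_div (k : ℕ) {t : ℝ} (ht : 0 < t) :
    IntegrableOn (fun s => s ^ k * exp (-s ^ 2 / t)) (Ioi 0) :=
  .of_integral_ne_zero <| by
    rw [integral_Ioi_pow_mul_exp_neg_sq_div k ht]
    have := Gamma_pos_of_pos (by positivity : (0:ℝ) < (k + 1) / 2)
    positivity

lemma rpow_le_sqrt_one_add_sq_rpow {t a b : ℝ} (ht : 0 ≤ t) (ha : 0 ≤ a) (hab : a ≤ b) :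
    t ^ a ≤ √(1 + t ^ 2) ^ b :=
  calc t ^ a ≤ √(1 + t ^ 2) ^ a := rpow_le_rpow ht (le_sqrt_of_sq_le (by linarith)) ha
    _ ≤ √(1 + t ^ 2) ^ b := rpow_le_rpow_of_exponent_le (le_sqrt_of_sq_le (by nlinarith)) hab

lemma exp_neg_add_sq_div_le {s D t : ℝ} (hs : 0 ≤ s) (hD : 0 ≤ D) (ht : 0 ≤ t) :
    exp (-(s + D) ^ 2 / t) ≤ exp (-s ^ 2 / t) * exp (-D ^ 2 / t) := by
  rw [← exp_add, ← add_div, exp_le_exp]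
  exact div_le_div_of_nonneg_right (by nlinarith [mul_nonneg hs hD]) ht

lemma integral_Ioi_comp_add_right {F : Type*} [NormedAddCommGroup F] [NormedSpace ℝ F]
    (f : ℝ → F) (a : ℝ) : ∫ s in Ioi 0, f (s + a) = ∫ r in Ioi a, f r := by
  simpa using (measurePreserving_add_right volume a).setIntegral_preimage_emb
    (measurableEmbedding_addRight a) f (Ioi a)

lemma integral_Ioi_pow_mul_exp_neg_sq_div_le (n : ℕ) {D t : ℝ} (hD : 0 ≤ D) (ht : 0 < t) :
    ∫ r in Ioi D, r ^ n * exp (-r ^ 2 / t) ≤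
      2 ^ (n - 1) * (Gamma ((n + 1) / 2) + Gamma (1 / 2)) / 2 * √(1 + D ^ 2) ^ n *
        √(1 + t ^ 2) ^ (((n : ℝ) + 1) / 2) * exp (-D ^ 2 / t) := by
  set M : ℕ → ℝ := fun k => ∫ s in Ioi 0, s ^ k * exp (-s ^ 2 / t)
  set T := √(1 + t ^ 2) ^ (((n : ℝ) + 1) / 2)
  have hM : ∀ k ≤ n, M k ≤ Gamma ((k + 1) / 2) / 2 * T := fun k hk => by
    have := Gamma_pos_of_pos (by positivity : (0:ℝ) < (k + 1) / 2)
    simp only [M, integral_Ioi_pow_mul_exp_neg_sq_div k ht]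
    gcongr
    exact rpow_le_sqrt_one_add_sq_rpow ht.le (by positivity) (by gcongr)
  have hM0 : M 0 ≤ Gamma (1 / 2) / 2 * T := by simpa using hM 0 n.zero_le
  have hDn : D ^ n ≤ √(1 + D ^ 2) ^ n := pow_le_pow_left₀ hD (le_sqrt_of_sq_le (by linarith)) n
  have h1n : 1 ≤ √(1 + D ^ 2) ^ n := one_le_pow₀ (le_sqrt_of_sq_le (by nlinarith))
  have hI := fun k => integrableOn_Ioi_pow_mul_exp_neg_sq_div k ht
  calc ∫ r in Ioi D, r ^ n * exp (-r ^ 2 / t)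
      = ∫ s in Ioi 0, (s + D) ^ n * exp (-(s + D) ^ 2 / t) :=
        (integral_Ioi_comp_add_right (fun r => r ^ n * exp (-r ^ 2 / t)) D).symm
    _ ≤ ∫ s in Ioi 0, 2 ^ (n - 1) * exp (-D ^ 2 / t) *
          (s ^ n * exp (-s ^ 2 / t) + D ^ n * (s ^ 0 * exp (-s ^ 2 / t))) := by
        refine integral_mono_of_nonneg ?_ (((hI n).add ((hI 0).const_mul _)).const_mul _) ?_
        all_goals refine ae_restrict_of_forall_mem measurableSet_Ioi fun s (hs : 0 < s) => ?_
        · positivity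
        · calc (s + D) ^ n * exp (-(s + D) ^ 2 / t)
              ≤ (2 ^ (n - 1) * (s ^ n + D ^ n)) * (exp (-s ^ 2 / t) * exp (-D ^ 2 / t)) :=
                mul_le_mul (add_pow_le hs.le hD n) (exp_neg_add_sq_div_le hs.le hD ht.le)
                  (exp_pos _).le (by positivity)
            _ = _ := by ring
    _ = 2 ^ (n - 1) * exp (-D ^ 2 / t) * (M n + D ^ n * M 0) := by
        rw [integral_const_mul, integral_add (hI n) ((hI 0).const_mul _), integral_const_mul]
    _ ≤ 2 ^ (n - 1) * exp (-D ^ 2 / t) * (√(1 + D ^ 2) ^ n * (Gamma ((n + 1) / 2) / 2 * T) +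
          √(1 + D ^ 2) ^ n * (Gamma (1 / 2) / 2 * T)) := by
        have hM0_nonneg : 0 ≤ M 0 := setIntegral_nonneg measurableSet_Ioi fun s _ => by positivity
        gcongr
        exact (hM n le_rfl).trans (le_mul_of_one_le_left (by positivity) h1n)
    _ = _ := by ring

section Polar

variable {E F : Type*} [NormedAddCommGroup E] [NormedSpace ℝ E] [FiniteDimensional ℝ E]
  [Nontrivial E] [MeasurableSpace E] [BorelSpace E] (μ : Measure E) [μ.IsAddHaarMeasure]
  [NormedAddCommGroup F] [NormedSpace ℝ F]

lemma setIntegral_compl_ball_fun_norm_addHaar (f : ℝ → F) {D : ℝ} (hD : 0 ≤ D) :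
    ∫ x in (ball 0 D)ᶜ, f ‖x‖ ∂μ =
      finrank ℝ E • μ.real (ball 0 1) • ∫ r in Ioi D, r ^ (finrank ℝ E - 1) • f r := by
  have hball : (ball (0 : E) D)ᶜ = (‖·‖) ⁻¹' Ici D := by ext; simp
  have hIoi : (Ioi 0 ∩ Ici D : Set ℝ) =ᵐ[volume] Ici D := by
    simpa [Ici_inter_Ici, max_eq_right hD] using
      (Ioi_ae_eq_Ici (a := (0 : ℝ))).inter (ae_eq_refl (Ici D))
  have hind : (ball (0 : E) D)ᶜ.indicator (fun x => f ‖x‖) =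
      fun x => (Ici D).indicator f ‖x‖ := by
    rw [hball]
    exact funext fun x => indicator_comp_right (‖·‖)
  rw [← integral_indicator measurableSet_ball.compl, hind, integral_fun_norm_addHaar μ,
    ← indicator_smul (Ici D) (· ^ (finrank ℝ E - 1)) f,
    setIntegral_indicator measurableSet_Ici, setIntegral_congr_set hIoi,
    integral_Ici_eq_integral_Ioi]

lemma setIntegral_compl_ball_fun_norm_sub_addHaar (f : ℝ → F) (x : E) {D : ℝ} (hD : 0 ≤ D) :
    ∫ y in (ball x D)ᶜ, f ‖x - y‖ ∂μ =
      finrank ℝ E • μ.real (ball 0 1) • ∫ r in Ioi D, r ^ (finrank ℝ E - 1) • f r := by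
  have hpre : (x - ·) ⁻¹' (ball (0 : E) D)ᶜ = (ball x D)ᶜ := by
    ext; simp [dist_eq_norm, norm_sub_rev]
  rw [← setIntegral_compl_ball_fun_norm_addHaar μ f hD, ← hpre]
  exact (μ.measurePreserving_sub_left x).setIntegral_preimage_emb
    (MeasurableEquiv.subLeft x).measurableEmbedding (fun z => f ‖z‖) _

end Polar

section GaussianOutsideBall

variable {V : Type*} [NormedAddCommGroup V] [InnerProductSpace ℝ V] [FiniteDimensional ℝ V]
  [MeasurableSpace V] [BorelSpace V] (E : Set V) (x : V) {t : ℝ}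

lemma setIntegral_exp_neg_sq_norm_sub_div_le (ht : 0 < t) :
    ∫ y in E, exp (-‖x - y‖ ^ 2 / t) ≤ (π * t) ^ (finrank ℝ V / 2 : ℝ) := by
  rw [← integral_exp_neg_sq_norm_div ht, ← integral_sub_left_eq_self _ volume x]
  exact setIntegral_le_integral ((integrable_exp_neg_sq_norm_div ht).comp_sub_left x)
    (ae_of_all _ fun _ => (exp_pos _).le)

lemma setIntegral_exp_neg_sq_norm_sub_div_le_integral_Ioi_infDist [Nontrivial V] (ht : 0 < t) :
    ∫ y in E, exp (-‖x - y‖ ^ 2 / t) ≤ finrank ℝ V * volume.real (ball (0 : V) 1) *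
      ∫ r in Ioi (infDist x E), r ^ (finrank ℝ V - 1) * exp (-r ^ 2 / t) := by
  have hE : E ⊆ (ball x (infDist x E))ᶜ := fun y hy => by
    simpa [dist_comm] using infDist_le_dist_of_mem (x := x) hy
  calc ∫ y in E, exp (-‖x - y‖ ^ 2 / t)
      ≤ ∫ y in (ball x (infDist x E))ᶜ, exp (-‖x - y‖ ^ 2 / t) :=
        setIntegral_mono_set ((integrable_exp_neg_sq_norm_div ht).comp_sub_left x).integrableOn
          (ae_of_all _ fun _ => (exp_pos _).le) hE.eventuallyLE
    _ = _ := by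
      rw [setIntegral_compl_ball_fun_norm_sub_addHaar volume (fun r => exp (-r ^ 2 / t)) x
        infDist_nonneg]
      simp only [nsmul_eq_mul, smul_eq_mul, mul_assoc]

end GaussianOutsideBall

/-- There is `C = C(d) > 0` such that for every closed `E ⊆ ℝ^d`, every `x` and `t > 0`,
`∫_E e^{-|x-y|²/t} dy ≤ C ⟨dist(x,E)⟩^{d-1} ⟨t⟩^{d/2} e^{-dist(x,E)²/t}`. -/
theorem gaussian_integral_closed_set_bound (d : ℕ) :
    ∃ C : ℝ, 0 < C ∧ ∀ E : Set (EuclideanSpace ℝ (Fin d)), IsClosed E →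
      ∀ x : EuclideanSpace ℝ (Fin d), ∀ t : ℝ, 0 < t →
        ∫ y in E, Real.exp (-‖x - y‖ ^ 2 / t) ≤
          C * Real.sqrt (1 + Metric.infDist x E ^ 2) ^ (d - 1) *
            Real.sqrt (1 + t ^ 2) ^ ((d : ℝ) / 2) *
            Real.exp (-Metric.infDist x E ^ 2 / t) := by
  rcases d.eq_zero_or_pos with rfl | hd
  · refine ⟨1, one_pos, fun E _ x t ht => ?_⟩
    have hD : infDist x E = 0 := by
      rcases E.eq_empty_or_nonempty with rfl | ⟨y, hy⟩
      · exact infDist_empty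
      · exact Subsingleton.elim x y ▸ infDist_zero_of_mem hy
    simpa [hD] using setIntegral_exp_neg_sq_norm_sub_div_le E x ht
  · have : Nontrivial (EuclideanSpace ℝ (Fin d)) :=
      Module.nontrivial_of_finrank_pos (R := ℝ) (by rwa [finrank_euclideanSpace_fin])
    set c := volume.real (ball (0 : EuclideanSpace ℝ (Fin d)) 1)
    have hc : 0 < c :=
      ENNReal.toReal_pos (measure_ball_pos volume 0 one_pos).ne' measure_ball_lt_top.ne
    have hd_cast : ((d - 1 : ℕ) : ℝ) + 1 = d := by rw [Nat.cast_sub hd]; ring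
    refine ⟨d * c * (2 ^ (d - 1 - 1) * (Gamma (d / 2) + Gamma (1 / 2)) / 2), by positivity,
      fun E _ x t ht => ?_⟩
    have hradial :=
      integral_Ioi_pow_mul_exp_neg_sq_div_le (d - 1) (infDist_nonneg (x := x) (s := E)) ht
    rw [hd_cast] at hradial
    calc ∫ y in E, exp (-‖x - y‖ ^ 2 / t)
        ≤ d * c * ∫ r in Ioi (infDist x E), r ^ (d - 1) * exp (-r ^ 2 / t) := by
          simpa [finrank_euclideanSpace_fin] using
            setIntegral_exp_neg_sq_norm_sub_div_le_integral_Ioi_infDist E x ht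
      _ ≤ _ := by
        grw [hradial]
        exact le_of_eq (by ring)
end

section
/- Let f ∈ L^∞(ℝ) be compactly supported. Its Gaussian regularization extends to an entire function f_λ(z) = (λ/(4π))^{1/2} ∫_ℝ f(y) e^{-λ(z-y)²/4} dy, and there is a constant C (depending only on ‖f‖_{L^∞} and the measure of supp f) such that for all λ ≥ 1 and z ∈ ℂ, |f_λ(z)| ≤ C λ^{1/2} e^{(λ/4)(Im z)²} e^{-(λ/4) dist(Re z, supp f)²}. -/
open MeasureTheory Set

/-- Complexified Gaussian regularization of `f : ℝ → ℝ`: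
`f_λ(z) = (λ/(4π))^{1/2} ∫ f(y) e^{-λ(z-y)²/4} dy`, where `(z-y)²` is the complex square. -/
noncomputable def cgreg (f : ℝ → ℝ) (lam : ℝ) (z : ℂ) : ℂ :=
  (Real.sqrt (lam / (4 * Real.pi)) : ℂ) *
    ∫ y : ℝ, (f y : ℂ) * Complex.exp (-(lam : ℂ) * (z - (y : ℂ)) ^ 2 / 4)

/-!
Since `Re (-(z - y)²) = (Im z)² - (Re z - y)²`, the integrand has modulus
`|f y| e^{(λ/4)(Im z)²} e^{-(λ/4)(Re z - y)²}`, and for `y ∈ supp f` the last factor is at most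
`e^{-(λ/4) dist(Re z, supp f)²}`; integrating over `supp f` and using `√(λ/4π) ≤ √λ` gives the
bound with `C = M A`. Holomorphy comes from differentiating under the integral sign: the
`z`-derivative of the kernel is continuous, hence bounded on `closedBall z₀ 1 ×ˢ supp f`, and this
bound times `|f|` is an integrable dominating function.
-/

open Filter Metric

section ParametricIntegral

variable {X 𝕜 : Type*} [TopologicalSpace X] [RCLike 𝕜]

lemma norm_mul_le_of_forall_mem_tsupport {g k : X → 𝕜} {C : ℝ}
    (hk : ∀ y ∈ tsupport g, ‖k y‖ ≤ C) (y : X) : ‖g y * k y‖ ≤ ‖g y‖ * C := by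
  by_cases hy : y ∈ tsupport g
  · rw [norm_mul]
    exact mul_le_mul_of_nonneg_left (hk y hy) (norm_nonneg _)
  · simp [image_eq_zero_of_notMem_tsupport hy]

variable [MeasurableSpace X] [OpensMeasurableSpace X] {μ : Measure X}

lemma differentiable_integral_mul_of_hasCompactSupport {g : X → 𝕜} (hg : Integrable g μ)
    (hgs : HasCompactSupport g) {K K' : 𝕜 → X → 𝕜} (hK : Continuous (Function.uncurry K))
    (hK' : Continuous (Function.uncurry K')) (hderiv : ∀ z y, HasDerivAt (K · y) (K' z y) z) :
    Differentiable 𝕜 fun z ↦ ∫ y, g y * K z y ∂μ := by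
  have hmeas {L : 𝕜 → X → 𝕜} (hL : Continuous (Function.uncurry L)) (z : 𝕜) :
      AEStronglyMeasurable (fun y ↦ g y * L z y) μ :=
    hg.aestronglyMeasurable.mul (hL.comp (Continuous.prodMk_right z)).aestronglyMeasurable
  intro z₀
  obtain ⟨C₀, hC₀⟩ := (isCompact_singleton (x := z₀) |>.prod hgs).exists_bound_of_continuousOn
    hK.continuousOn
  obtain ⟨C, hC⟩ := (isCompact_closedBall z₀ 1 |>.prod hgs).exists_bound_of_continuousOn
    hK'.continuousOn
  have hF_int : Integrable (fun y ↦ g y * K z₀ y) μ :=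
    (hg.norm.mul_const C₀).mono' (hmeas hK z₀) <| ae_of_all _ <|
      norm_mul_le_of_forall_mem_tsupport fun y hy ↦ hC₀ (z₀, y) ⟨rfl, hy⟩
  have h_bound : ∀ᵐ y ∂μ, ∀ z ∈ ball z₀ 1, ‖g y * K' z y‖ ≤ ‖g y‖ * C :=
    ae_of_all _ fun y z hz ↦ norm_mul_le_of_forall_mem_tsupport
      (fun y hy ↦ hC (z, y) ⟨ball_subset_closedBall hz, hy⟩) y
  exact (hasDerivAt_integral_of_dominated_loc_of_deriv_le (ball_mem_nhds z₀ one_pos)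
    (Eventually.of_forall (hmeas hK)) hF_int (hmeas hK' z₀) h_bound (hg.norm.mul_const C)
    (ae_of_all _ fun y z _ ↦ (hderiv z y).const_mul (g y))).2.differentiableAt

end ParametricIntegral

section Gaussian

lemma re_neg_mul_sub_sq_div_four (lam : ℝ) (z : ℂ) (y : ℝ) :
    (-(lam : ℂ) * (z - y) ^ 2 / 4).re = lam / 4 * z.im ^ 2 - lam / 4 * (z.re - y) ^ 2 := by
  simp only [Complex.div_ofNat_re, Complex.mul_re, Complex.neg_re, Complex.ofReal_re,
    Complex.neg_im, Complex.ofReal_im, sq, Complex.sub_re, Complex.sub_im, Complex.mul_im]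
  ring

lemma norm_cexp_neg_mul_sub_sq_div_four (lam : ℝ) (z : ℂ) (y : ℝ) :
    ‖Complex.exp (-(lam : ℂ) * (z - y) ^ 2 / 4)‖
      = Real.exp (lam / 4 * z.im ^ 2 - lam / 4 * (z.re - y) ^ 2) := by
  rw [Complex.norm_exp, re_neg_mul_sub_sq_div_four]

lemma norm_cexp_neg_mul_sub_sq_div_four_le {lam : ℝ} (hlam : 0 ≤ lam) {s : Set ℝ} (z : ℂ)
    {y : ℝ} (hy : y ∈ s) :
    ‖Complex.exp (-(lam : ℂ) * (z - y) ^ 2 / 4)‖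
      ≤ Real.exp (lam / 4 * z.im ^ 2) * Real.exp (-(lam / 4) * infDist z.re s ^ 2) := by
  have hdist : infDist z.re s ^ 2 ≤ (z.re - y) ^ 2 := by
    rw [← sq_abs (z.re - y), ← Real.dist_eq]
    exact pow_le_pow_left₀ infDist_nonneg (infDist_le_dist_of_mem hy) 2
  rw [norm_cexp_neg_mul_sub_sq_div_four, ← Real.exp_add]
  gcongr
  nlinarith

lemma hasDerivAt_cexp_neg_mul_sub_sq_div_four (lam : ℝ) (w z : ℂ) :
    HasDerivAt (fun z ↦ Complex.exp (-(lam : ℂ) * (z - w) ^ 2 / 4))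
      (Complex.exp (-(lam : ℂ) * (z - w) ^ 2 / 4) * (-(lam : ℂ) * (z - w) / 2)) z := by
  have h := ((hasDerivAt_id' z).sub_const w).pow 2 |>.const_mul (-(lam : ℂ)) |>.div_const 4
  exact h.cexp.congr_deriv (by simp only [Pi.pow_apply]; ring)

lemma differentiable_cgreg {f : ℝ → ℝ} (hf : Measurable f) {M : ℝ} (hfM : ∀ y, |f y| ≤ M)
    (hfc : HasCompactSupport f) (lam : ℝ) : Differentiable ℂ (cgreg f lam) := by
  have hint : Integrable (fun y ↦ (f y : ℂ)) := by
    exact (Measure.integrableOn_of_bounded (s := tsupport f) hfc.measure_lt_top.ne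
      (Complex.measurable_ofReal.comp hf).aestronglyMeasurable (M := M)
      (ae_of_all _ fun y ↦ by simpa using hfM y)).integrable_of_forall_notMem_eq_zero
      fun y hy ↦ by simp [image_eq_zero_of_notMem_tsupport hy]
  have hfc' : HasCompactSupport fun y ↦ (f y : ℂ) := hfc.comp_left Complex.ofReal_zero
  refine (differentiable_integral_mul_of_hasCompactSupport hint hfc' ?_ ?_
    (K' := fun z y ↦ Complex.exp (-(lam : ℂ) * (z - y) ^ 2 / 4) * (-(lam : ℂ) * (z - y) / 2))
    fun z y ↦ ?_).const_mul _
  · fun_prop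
  · fun_prop
  · exact hasDerivAt_cexp_neg_mul_sub_sq_div_four lam (y : ℂ) z

lemma norm_integral_mul_cexp_neg_mul_sub_sq_div_four_le {f : ℝ → ℝ} {M : ℝ}
    (hfM : ∀ y, |f y| ≤ M) (hfin : volume (tsupport f) < ⊤) {lam : ℝ} (hlam : 0 ≤ lam) (z : ℂ) :
    ‖∫ y : ℝ, (f y : ℂ) * Complex.exp (-(lam : ℂ) * (z - y) ^ 2 / 4)‖
      ≤ M * Real.exp (lam / 4 * z.im ^ 2) * Real.exp (-(lam / 4) * infDist z.re (tsupport f) ^ 2)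
        * volume.real (tsupport f) := by
  rw [← setIntegral_eq_integral_of_forall_compl_eq_zero (s := tsupport f) fun y hy ↦ by
    simp [image_eq_zero_of_notMem_tsupport hy]]
  refine norm_setIntegral_le_of_norm_le_const hfin fun y hy ↦ ?_
  rw [norm_mul, Complex.norm_real, Real.norm_eq_abs, mul_assoc]
  exact mul_le_mul (hfM y) (norm_cexp_neg_mul_sub_sq_div_four_le hlam z hy) (norm_nonneg _)
    ((abs_nonneg _).trans (hfM y))

end Gaussian

/-- For compactly supported bounded `f`, the complexified Gaussian regularization is entire,
and there is `C` (depending only on the sup bound and on the measure of the support) with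
`|f_λ(z)| ≤ C λ^{1/2} e^{(λ/4)(Im z)²} e^{-(λ/4) dist(Re z, supp f)²}` for `λ ≥ 1`. -/
theorem cgreg_entire_and_bound (M A : ℝ) (hM : 0 < M) (hA : 0 < A) :
    ∃ C : ℝ, 0 < C ∧ ∀ f : ℝ → ℝ, Measurable f → (∀ y, |f y| ≤ M) →
      HasCompactSupport f → volume (tsupport f) ≤ ENNReal.ofReal A →
      ∀ lam : ℝ, 1 ≤ lam →
        Differentiable ℂ (cgreg f lam) ∧
        ∀ z : ℂ, ‖cgreg f lam z‖ ≤
          C * Real.sqrt lam * Real.exp (lam / 4 * z.im ^ 2) *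
            Real.exp (-(lam / 4) * Metric.infDist z.re (tsupport f) ^ 2) := by
  refine ⟨M * A, mul_pos hM hA, fun f hf hfM hfc hvol lam hlam ↦
    ⟨differentiable_cgreg hf hfM hfc lam, fun z ↦ ?_⟩⟩
  have hlam₀ : 0 ≤ lam := zero_le_one.trans hlam
  have hsqrt : √(lam / (4 * Real.pi)) ≤ √lam :=
    Real.sqrt_le_sqrt (div_le_self hlam₀ (by nlinarith [Real.pi_gt_three]))
  have hvolA : volume.real (tsupport f) ≤ A := ENNReal.toReal_le_of_le_ofReal hA.le hvol
  have hint := norm_integral_mul_cexp_neg_mul_sub_sq_div_four_le hfM hfc.measure_lt_top hlam₀ z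
  rw [cgreg, norm_mul, Complex.norm_real, Real.norm_of_nonneg (Real.sqrt_nonneg _)]
  calc _ ≤ √lam * (M * Real.exp (lam / 4 * z.im ^ 2)
          * Real.exp (-(lam / 4) * infDist z.re (tsupport f) ^ 2) * volume.real (tsupport f)) :=
        mul_le_mul hsqrt hint (norm_nonneg _) (Real.sqrt_nonneg _)
    _ ≤ √lam * (M * Real.exp (lam / 4 * z.im ^ 2)
          * Real.exp (-(lam / 4) * infDist z.re (tsupport f) ^ 2) * A) := by gcongr
    _ = _ := by ring
end

section
/- There is a universal constant C > 0 such that for every D ∈ ℝ, every χ ∈ L^∞(ℝ) with supp χ ⊆ (-∞, D], every λ ≥ 1, τ > 0 and every z ∈ ℂ, one has |e^{τz} χ_λ(z)| ≤ C ‖χ‖_{L^∞} ⟨λ⟩^{1/2} e^{(λ/4)(Im z)²} e^{Dτ} e^{τ²/λ}, where χ_λ(z) = (λ/(4π))^{1/2} ∫_ℝ χ(y) e^{-λ(z-y)²/4} dy is the (complexified) Gaussian regularization of χ. -/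
/-!
For real `y`, `|e^{τz} e^{-λ(z-y)²/4}| = e^{(λ/4)(Im z)²} e^{τ Re z - (λ/4)(Re z - y)²}`, and
completing the square gives `τ Re z - (λ/4)(Re z - y)² = τy + τ²/λ - (λ/4)(y - a)²` with
`a = Re z - 2τ/λ`. On the support of `χ` we have `τy ≤ Dτ`, so the integrand of `e^{τz} χ_λ(z)`
is dominated by `‖χ‖_∞ e^{(λ/4)(Im z)²} e^{Dτ} e^{τ²/λ}` times a Gaussian centred at `a`,
whose integral exactly cancels the normalisation `(λ/(4π))^{1/2}`. Hence the bound holds with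
`C = 1`, since `⟨λ⟩^{1/2} ≥ 1`.
-/

open MeasureTheory Set

open Complex in
theorem norm_cexp_mul_cexp_neg_sq (lam τ : ℝ) (z : ℂ) (y : ℝ) :
    ‖cexp (τ * z) * cexp (-lam * (z - y) ^ 2 / 4)‖ =
      Real.exp (lam / 4 * z.im ^ 2) * Real.exp (τ * z.re - lam / 4 * (z.re - y) ^ 2) := by
  rw [← Complex.exp_add, Complex.norm_exp, ← Real.exp_add]
  congr 1
  simp only [sq, neg_mul, add_re, mul_re, ofReal_re, ofReal_im, zero_mul, sub_zero, div_ofNat_re,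
    neg_re, sub_re, sub_im, mul_im]
  ring

theorem mul_sub_sq_eq_complete_square {lam : ℝ} (hlam : lam ≠ 0) (τ x y : ℝ) :
    τ * x - lam / 4 * (x - y) ^ 2 =
      τ * y + τ ^ 2 / lam - lam / 4 * (y - (x - 2 * τ / lam)) ^ 2 := by
  field_simp
  ring

theorem sqrt_mul_integral_exp_neg_mul_sq_sub {lam : ℝ} (hlam : 0 < lam) (a : ℝ) :
    √(lam / (4 * Real.pi)) * ∫ y, Real.exp (-(lam / 4) * (y - a) ^ 2) = 1 := by
  rw [integral_sub_right_eq_self (fun t => Real.exp (-(lam / 4) * t ^ 2)) a,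
    integral_gaussian, ← Real.sqrt_mul (by positivity)]
  field_simp
  simp

open Complex in
theorem norm_cexp_mul_cexp_neg_sq_le {lam τ D y : ℝ} (hlam : 0 < lam) (hτ : 0 ≤ τ) (hy : y ≤ D)
    (z : ℂ) :
    ‖cexp (τ * z) * cexp (-lam * (z - y) ^ 2 / 4)‖ ≤
      Real.exp (lam / 4 * z.im ^ 2) * Real.exp (D * τ) * Real.exp (τ ^ 2 / lam) *
        Real.exp (-(lam / 4) * (y - (z.re - 2 * τ / lam)) ^ 2) := by
  rw [norm_cexp_mul_cexp_neg_sq, mul_sub_sq_eq_complete_square hlam.ne']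
  simp only [← Real.exp_add, Real.exp_le_exp]
  nlinarith [mul_le_mul_of_nonneg_left hy hτ]

theorem norm_cexp_mul_cgreg_le {χ : ℝ → ℝ} {M D lam τ : ℝ} (hM : ∀ y, |χ y| ≤ M)
    (hsupp : ∀ y, χ y ≠ 0 → y ≤ D) (hlam : 0 < lam) (hτ : 0 ≤ τ) (z : ℂ) :
    ‖Complex.exp (τ * z) * cgreg χ lam z‖ ≤
      M * Real.exp (lam / 4 * z.im ^ 2) * Real.exp (D * τ) * Real.exp (τ ^ 2 / lam) := by
  set K := M * Real.exp (lam / 4 * z.im ^ 2) * Real.exp (D * τ) * Real.exp (τ ^ 2 / lam)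
  set g : ℝ → ℝ := fun y => Real.exp (-(lam / 4) * (y - (z.re - 2 * τ / lam)) ^ 2)
  have hM0 : 0 ≤ M := (abs_nonneg _).trans (hM 0)
  have hK : 0 ≤ K := by positivity
  have hintegrand : ∀ y : ℝ,
      ‖(χ y : ℂ) * (Complex.exp (τ * z) * Complex.exp (-lam * (z - y) ^ 2 / 4))‖ ≤ K * g y := by
    intro y
    rw [norm_mul, Complex.norm_real, Real.norm_eq_abs]
    by_cases hχ : χ y = 0
    · rw [hχ, abs_zero, zero_mul]
      positivity
    · calc _ ≤ M * (Real.exp (lam / 4 * z.im ^ 2) * Real.exp (D * τ) * Real.exp (τ ^ 2 / lam) *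
              g y) :=
            mul_le_mul (hM y) (norm_cexp_mul_cexp_neg_sq_le hlam hτ (hsupp y hχ) z)
              (norm_nonneg _) hM0
        _ = K * g y := by ring
  have hg : Integrable g := (integrable_exp_neg_mul_sq (by positivity)).comp_sub_right _
  calc ‖Complex.exp (τ * z) * cgreg χ lam z‖
      = √(lam / (4 * Real.pi)) *
          ‖∫ y : ℝ, (χ y : ℂ) * (Complex.exp (τ * z) * Complex.exp (-lam * (z - y) ^ 2 / 4))‖ := by
        rw [cgreg, mul_left_comm, ← integral_const_mul, norm_mul, Complex.norm_real,
          Real.norm_of_nonneg (Real.sqrt_nonneg _)]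
        simp only [mul_left_comm (Complex.exp _)]
    _ ≤ √(lam / (4 * Real.pi)) * ∫ y, K * g y := by
        gcongr
        exact norm_integral_le_of_norm_le (hg.const_mul K) (.of_forall hintegrand)
    _ = K := by
        rw [integral_const_mul, mul_left_comm, sqrt_mul_integral_exp_neg_mul_sq_sub hlam, mul_one]

theorem one_le_sqrt_sqrt_one_add_sq (x : ℝ) : 1 ≤ √√(1 + x ^ 2) := by
  simp only [Real.one_le_sqrt]
  nlinarith [sq_nonneg x]

/-- There is a universal constant `C > 0` such that for every `D ∈ ℝ`, every bounded
measurable `χ` with `supp χ ⊆ (-∞, D]`, every `λ ≥ 1`, `τ > 0` and every `z ∈ ℂ`,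
`|e^{τz} χ_λ(z)| ≤ C ‖χ‖_{L^∞} ⟨λ⟩^{1/2} e^{(λ/4)(Im z)²} e^{Dτ} e^{τ²/λ}`. -/
theorem exp_cgreg_bound :
    ∃ C : ℝ, 0 < C ∧ ∀ (D : ℝ) (χ : ℝ → ℝ), Measurable χ →
      ∀ M : ℝ, (∀ y, |χ y| ≤ M) → (∀ y, χ y ≠ 0 → y ≤ D) →
      ∀ lam τ : ℝ, 1 ≤ lam → 0 < τ → ∀ z : ℂ,
        ‖Complex.exp ((τ : ℂ) * z) * cgreg χ lam z‖ ≤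
          C * M * Real.sqrt (Real.sqrt (1 + lam ^ 2)) *
            Real.exp (lam / 4 * z.im ^ 2) * Real.exp (D * τ) * Real.exp (τ ^ 2 / lam) := by
  refine ⟨1, one_pos, fun D χ _ M hM hsupp lam τ hlam hτ z => ?_⟩
  have hM0 : 0 ≤ M := (abs_nonneg _).trans (hM 0)
  calc _ ≤ M * Real.exp (lam / 4 * z.im ^ 2) * Real.exp (D * τ) * Real.exp (τ ^ 2 / lam) :=
        norm_cexp_mul_cgreg_le hM hsupp (by linarith) hτ.le z
    _ ≤ _ := by
        rw [one_mul]
        gcongr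
        exact le_mul_of_one_le_right hM0 (one_le_sqrt_sqrt_one_add_sq lam)
end

section
/- Let K be a compact topological space and f, g, h : K → ℝ continuous, with f ≥ 0 on K and g > 0 on the zero set {f = 0}. Then there exist A₀ > 0 and C > 0 such that for all A ≥ A₀, g + A f - (1/A) h ≥ C on K. -/
/-!
The open sets `{g + a f > 0}` increase with `a` (as `f ≥ 0`) and cover `K` (as `g > 0` where
`f = 0`), so by compactness a single `a` makes `g + a f` positive, hence `≥ c > 0`, on all of `K`.
For `A ≥ a` the term `A f` only helps, and once `A ≥ 2 (sup h) / c` the perturbation `h / A`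
costs at most `c / 2`.
-/

open Set

section

variable {K : Type*} {f g : K → ℝ}

theorem monotone_setOf_pos_add_mul (hf0 : ∀ x, 0 ≤ f x) :
    Monotone fun a : ℝ => {x | 0 < g x + a * f x} :=
  fun _ _ hab x hx => by
    have := mul_le_mul_of_nonneg_right hab (hf0 x)
    simp only [mem_ofPred_eq] at hx ⊢
    linarith

theorem exists_pos_add_mul_of_pos_of_zero (hf0 : ∀ x, 0 ≤ f x)
    (hgpos : ∀ x, f x = 0 → 0 < g x) (x : K) : ∃ a : ℝ, 0 < g x + a * f x := by
  rcases (hf0 x).eq_or_lt with hfx | hfx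
  · exact ⟨0, by simpa using hgpos x hfx.symm⟩
  · refine ⟨-g x / f x + 1, ?_⟩
    rw [add_mul, div_mul_cancel₀ _ hfx.ne']
    linarith

theorem exists_forall_pos_add_mul [TopologicalSpace K] [CompactSpace K] (hf : Continuous f)
    (hg : Continuous g) (hf0 : ∀ x, 0 ≤ f x) (hgpos : ∀ x, f x = 0 → 0 < g x) :
    ∃ a : ℝ, ∀ x, 0 < g x + a * f x := by
  obtain ⟨a, ha⟩ := isCompact_univ.elim_directed_cover (fun a : ℝ => {x | 0 < g x + a * f x})
    (fun a => isOpen_lt continuous_const (hg.add (continuous_const.mul hf)))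
    (fun x _ => mem_iUnion.2 (exists_pos_add_mul_of_pos_of_zero hf0 hgpos x))
    (monotone_setOf_pos_add_mul hf0).directed_le
  exact ⟨a, fun x => ha (mem_univ x)⟩

end

/-- Compactness lemma: if `f ≥ 0` on a compact `K` and `g > 0` on `{f = 0}`, then there are
`A₀, C > 0` such that `g + A f - (1/A) h ≥ C` on `K` for all `A ≥ A₀`. -/
theorem compactness_fgh {K : Type*} [TopologicalSpace K] [CompactSpace K]
    (f g h : K → ℝ) (hf : Continuous f) (hg : Continuous g) (hh : Continuous h)
    (hf0 : ∀ x, 0 ≤ f x) (hgpos : ∀ x, f x = 0 → 0 < g x) :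
    ∃ A₀ C : ℝ, 0 < A₀ ∧ 0 < C ∧
      ∀ A : ℝ, A₀ ≤ A → ∀ x, C ≤ g x + A * f x - (1 / A) * h x := by
  obtain ⟨a, ha⟩ := exists_forall_pos_add_mul hf hg hf0 hgpos
  obtain ⟨c, hc, hcle⟩ := isCompact_univ.exists_forall_le' (f := fun x => g x + a * f x)
    (hg.add (continuous_const.mul hf)).continuousOn (fun x _ => ha x)
  obtain ⟨B, hB⟩ := (isCompact_range hh).bddAbove
  refine ⟨max (max a 1) (2 * B / c), c / 2, by positivity, by positivity, fun A hA x => ?_⟩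
  have hA1 : 1 ≤ A := le_trans (by simp) hA
  have hAa : a ≤ A := le_trans (by simp) hA
  have hBA : 2 * B / c ≤ A := le_trans (le_max_right _ _) hA
  have hgf : c ≤ g x + A * f x := by
    have := mul_le_mul_of_nonneg_right hAa (hf0 x)
    linarith [hcle x (mem_univ x)]
  have hhA : 1 / A * h x ≤ c / 2 := by
    rw [div_le_iff₀ hc] at hBA
    rw [one_div_mul_eq_div, div_le_iff₀ (by linarith)]
    linarith [hB (mem_range_self x)]
  linarith
end

section
/- Let C₁, C₂, α > 0. There exists K > 0 such that for every μ₀ > 0 and all a, b, c > 0 satisfying b ≤ C₂ c, a ≤ c, and a ≤ e^{C₁ μ} b + μ^{-α} c for all μ ≥ μ₀, one has a ≤ D₁ c / (log(c/b + 1))^α with D₁ = (2C₁)^α max{K, μ₀^α}. -/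
/-!
Take `μ = L / (2 C₁)` with `L = log (c / b + 1)`, so that `e^{C₁ μ} b = e^{L/2} b`. Since
`e^L b = c + b ≤ (C₂ + 1) c` and `L^α ≤ (2α)^α e^{L/2}`, both terms of the hypothesis are then
`O(c / L^α)`. If instead `L / (2 C₁) < μ₀`, the trivial bound `a ≤ c` already suffices.
-/

open Real

lemma rpow_le_div_rpow_mul_exp {α ε x : ℝ} (hα : 0 < α) (hε : 0 < ε) (hx : 0 ≤ x) :
    x ^ α ≤ (α / ε) ^ α * exp (ε * x) := by
  have hexp : ε * x / α ≤ exp (ε * x / α) := by linarith [add_one_le_exp (ε * x / α)]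
  calc x ^ α = (α / ε) ^ α * (ε * x / α) ^ α := by
        rw [← mul_rpow (by positivity) (by positivity)]
        field_simp
    _ ≤ (α / ε) ^ α * exp (ε * x / α) ^ α := by gcongr
    _ = (α / ε) ^ α * exp (ε * x) := by
        rw [← exp_mul]
        field_simp

lemma exp_half_log_mul_rpow_le {α C b c : ℝ} (hα : 0 < α) (hb : 0 < b) (hc : 0 < c)
    (hbc : b ≤ C * c) :
    exp (log (c / b + 1) / 2) * b * log (c / b + 1) ^ α ≤ (2 * α) ^ α * (C + 1) * c := by
  set L := log (c / b + 1)
  have hL : 0 ≤ L := log_nonneg (by linarith [div_pos hc hb])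
  have hexpL : exp L * b = c + b := by
    rw [exp_log (by positivity)]
    field_simp
  have hLα : L ^ α ≤ (2 * α) ^ α * exp (L / 2) := by
    convert rpow_le_div_rpow_mul_exp hα (by norm_num : (0 : ℝ) < 1 / 2) hL using 3 <;> ring
  calc exp (L / 2) * b * L ^ α ≤ exp (L / 2) * b * ((2 * α) ^ α * exp (L / 2)) := by gcongr
    _ = (2 * α) ^ α * (exp L * b) := by
        rw [show L = L / 2 + L / 2 by ring, exp_add]
        ring_nf
    _ ≤ (2 * α) ^ α * (C + 1) * c := by
        rw [hexpL, mul_assoc]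
        gcongr
        linarith

/-- Optimization lemma, logarithmic-stability conclusion: if `b ≤ C₂ c`, `a ≤ c`, and
`a ≤ e^{C₁ μ} b + μ^{-α} c` for all `μ ≥ μ₀`, then
`a ≤ D₁ c / (log(c/b + 1))^α` with `D₁ = (2C₁)^α max{K, μ₀^α}`. -/
theorem log_stability (C₁ C₂ α : ℝ) (hC₁ : 0 < C₁) (hC₂ : 0 < C₂) (hα : 0 < α) :
    ∃ K : ℝ, 0 < K ∧ ∀ μ₀ : ℝ, 0 < μ₀ → ∀ a b c : ℝ, 0 < a → 0 < b → 0 < c →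
      b ≤ C₂ * c → a ≤ c →
      (∀ μ : ℝ, μ₀ ≤ μ → a ≤ Real.exp (C₁ * μ) * b + μ ^ (-α) * c) →
      a ≤ (2 * C₁) ^ α * max K (μ₀ ^ α) * c / Real.log (c / b + 1) ^ α := by
  set K := (2 * α) ^ α * (C₂ + 1) / (2 * C₁) ^ α + 1
  refine ⟨K, by positivity, fun μ₀ hμ₀ a b c _ hb hc hbc hac h ↦ ?_⟩
  set L := log (c / b + 1)
  have hL : 0 < L := log_pos (by linarith [div_pos hc hb])
  rw [le_div_iff₀ (by positivity)]
  rcases le_or_gt μ₀ (L / (2 * C₁)) with hμ | hμ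
  · have hweight : (L / (2 * C₁)) ^ (-α) * L ^ α = (2 * C₁) ^ α := by
      rw [rpow_neg (by positivity), div_rpow hL.le (by positivity)]
      field_simp
    calc a * L ^ α
        ≤ (exp (C₁ * (L / (2 * C₁))) * b + (L / (2 * C₁)) ^ (-α) * c) * L ^ α := by
          gcongr
          exact h _ hμ
      _ = exp (L / 2) * b * L ^ α + (2 * C₁) ^ α * c := by
          rw [show C₁ * (L / (2 * C₁)) = L / 2 by field_simp, ← hweight]
          ring
      _ ≤ (2 * α) ^ α * (C₂ + 1) * c + (2 * C₁) ^ α * c := by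
          gcongr ?_ + _
          exact exp_half_log_mul_rpow_le hα hb hc hbc
      _ = (2 * C₁) ^ α * K * c := by
          simp only [K]
          field_simp
      _ ≤ (2 * C₁) ^ α * max K (μ₀ ^ α) * c := by
          gcongr
          exact le_max_left _ _
  · have hLμ : L ≤ 2 * C₁ * μ₀ := by
      rw [div_lt_iff₀ (by positivity)] at hμ
      linarith
    calc a * L ^ α ≤ c * (2 * C₁ * μ₀) ^ α := by gcongr
      _ = (2 * C₁) ^ α * μ₀ ^ α * c := by
          rw [mul_rpow (by positivity) hμ₀.le]
          ring
      _ ≤ (2 * C₁) ^ α * max K (μ₀ ^ α) * c := by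
          gcongr
          exact le_max_right _ _
end

section
/- Let C₁, C₂, α > 0. There exists K > 0 such that for every μ₀ > 0 and all a, b, c > 0 satisfying b ≤ C₂ c, a ≤ c, and a ≤ e^{C₁ μ} b + μ^{-α} c for all μ ≥ μ₀, one has c ≤ e^{D₂ (c/a)^{1/α}} b, with D₂ = 2C₁ max{K^{1/α}, μ₀}. -/
/-!
Take `μ = M T` with `T = (c/a)^{1/α}` and `M = max(K^{1/α}, μ₀)`. Since `K ≥ 2`, the remainder
`μ^{-α} c` is at most `a / 2`, so `a ≤ 2 e^{C₁ μ} b`. Multiplying by `c / a = T^α`, the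
polynomial factor `2 T^α` is absorbed by a second copy of `e^{C₁ μ}` once `C₁ K^{1/α} ≥ log 2 + α`.
-/

open Real

lemma rpow_neg_mul_le_half {α μ a c : ℝ} (hμ : 0 < μ) (ha : 0 < a) (h : 2 * (c / a) ≤ μ ^ α) :
    μ ^ (-α) * c ≤ a / 2 := by
  have hμα : 0 < μ ^ α := rpow_pos_of_pos hμ α
  rw [rpow_neg hμ.le, inv_mul_le_iff₀ hμα]
  rw [mul_div_assoc', div_le_iff₀ ha] at h
  linarith

lemma two_mul_le_mul_rpow_inv_rpow {α M t : ℝ} (hα : 0 < α) (ht : 0 ≤ t)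
    (hM : (2 : ℝ) ^ (1 / α) ≤ M) : 2 * t ≤ (M * t ^ (1 / α)) ^ α := by
  have h2 : (2 : ℝ) ≤ M ^ α := by
    calc (2 : ℝ) = ((2 : ℝ) ^ (1 / α)) ^ α := by rw [one_div, rpow_inv_rpow two_pos.le hα.ne']
      _ ≤ M ^ α := by gcongr
  rw [mul_rpow ((rpow_pos_of_pos two_pos _).le.trans hM) (by positivity), one_div, rpow_inv_rpow ht hα.ne']
  gcongr

lemma two_mul_rpow_le_exp {α T : ℝ} (hα : 0 ≤ α) (hT : 1 ≤ T) :
    2 * T ^ α ≤ exp ((log 2 + α) * T) := by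
  have h2 : 2 ≤ exp (log 2 * T) := by
    calc (2 : ℝ) = exp (log 2) := (exp_log two_pos).symm
      _ ≤ exp (log 2 * T) := by gcongr; exact le_mul_of_one_le_right (log_nonneg one_le_two) hT
  have hTα : T ^ α ≤ exp (α * T) := by
    rw [rpow_def_of_pos (by linarith), mul_comm]
    gcongr
    exact log_le_self (by linarith)
  rw [add_mul, exp_add]
  exact mul_le_mul h2 hTα (by positivity) (exp_pos _).le

theorem exp_cost_observability_general (C₁ C₂ α : ℝ) (hC₁ : 0 < C₁) (hα : 0 < α) :
    ∃ K : ℝ, 0 < K ∧ ∀ μ₀ : ℝ, 0 < μ₀ → ∀ a b c : ℝ, 0 < a → 0 < b → 0 < c →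
      b ≤ C₂ * c → a ≤ c →
      (∀ μ : ℝ, μ₀ ≤ μ → a ≤ Real.exp (C₁ * μ) * b + μ ^ (-α) * c) →
      c ≤ Real.exp (2 * C₁ * max (K ^ (1 / α)) μ₀ * (c / a) ^ (1 / α)) * b := by
  set L := max ((2 : ℝ) ^ (1 / α)) ((log 2 + α) / C₁)
  have hL_pos : 0 < L := (rpow_pos_of_pos two_pos _).trans_le (le_max_left _ _)
  have hC₁L : log 2 + α ≤ C₁ * L := by
    rw [← div_le_iff₀' hC₁]
    exact le_max_right _ _
  refine ⟨L ^ α, rpow_pos_of_pos hL_pos α, fun μ₀ hμ₀ a b c ha hb hc _ hac hμ => ?_⟩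
  rw [one_div, rpow_rpow_inv hL_pos.le hα.ne', ← one_div]
  set M := max L μ₀
  set T := (c / a) ^ (1 / α)
  have hT : 1 ≤ T := one_le_rpow ((one_le_div ha).2 hac) (by positivity)
  have hμ₀_le : μ₀ ≤ M * T := (le_max_right _ _).trans (le_mul_of_one_le_right (by positivity) hT)
  have hhalf : a ≤ 2 * (exp (C₁ * (M * T)) * b) := by
    have hM2 : (2 : ℝ) ^ (1 / α) ≤ M := (le_max_left _ _).trans (le_max_left _ _)
    have := rpow_neg_mul_le_half (by positivity) ha
      (two_mul_le_mul_rpow_inv_rpow hα (div_pos hc ha).le hM2)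
    linarith [hμ _ hμ₀_le]
  have hTα : T ^ α = c / a := by
    simp only [T, one_div]
    exact rpow_inv_rpow (div_pos hc ha).le hα.ne'
  have hpoly : 2 * (c / a) ≤ exp (C₁ * (M * T)) := by
    calc 2 * (c / a) = 2 * T ^ α := by rw [hTα]
      _ ≤ exp ((log 2 + α) * T) := two_mul_rpow_le_exp hα.le hT
      _ ≤ exp (C₁ * (M * T)) := by
        rw [← mul_assoc]
        gcongr
        exact hC₁L.trans (by gcongr; exact le_max_left _ _)
  calc c = c / a * a := (div_mul_cancel₀ c ha.ne').symm
    _ ≤ c / a * (2 * (exp (C₁ * (M * T)) * b)) := by gcongr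
    _ = 2 * (c / a) * exp (C₁ * (M * T)) * b := by ring
    _ ≤ exp (C₁ * (M * T)) * exp (C₁ * (M * T)) * b := by gcongr
    _ = exp (2 * C₁ * M * T) * b := by rw [← exp_add]; ring_nf

/-- Optimization lemma, exponential-cost conclusion: if `b ≤ C₂ c`, `a ≤ c`, and
`a ≤ e^{C₁ μ} b + μ^{-α} c` for all `μ ≥ μ₀`, then
`c ≤ e^{D₂ (c/a)^{1/α}} b` with `D₂ = 2C₁ max{K^{1/α}, μ₀}`. -/
theorem exp_cost_observability (C₁ C₂ α : ℝ) (hC₁ : 0 < C₁) (hC₂ : 0 < C₂) (hα : 0 < α) :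
    ∃ K : ℝ, 0 < K ∧ ∀ μ₀ : ℝ, 0 < μ₀ → ∀ a b c : ℝ, 0 < a → 0 < b → 0 < c →
      b ≤ C₂ * c → a ≤ c →
      (∀ μ : ℝ, μ₀ ≤ μ → a ≤ Real.exp (C₁ * μ) * b + μ ^ (-α) * c) →
      c ≤ Real.exp (2 * C₁ * max (K ^ (1 / α)) μ₀ * (c / a) ^ (1 / α)) * b :=
  exp_cost_observability_general C₁ C₂ α hC₁ hα
end

section
/- For all x, y > 0, (4xy/π) ∫_0^∞ η² / ((x² + (y+η)²)(x² + (y−η)²)) dη = y. -/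
open MeasureTheory Set Filter Real Topology

/-!
Since `(x² + (η+y)²) - (x² + (η-y)²) = 4yη`, the integrand splits into partial fractions
`((η-y)/B - (η+y)/A + y/B + y/A) / (4y)` with `A = x² + (η+y)²`, `B = x² + (η-y)²`,
which has the explicit primitive `F = (½ log B - ½ log A + (y/x)(arctan((η-y)/x) + arctan((η+y)/x))) / (4y)`.
`F 0 = 0` by parity, and `F → π/(4x)` at infinity since the logarithms cancel and both arctangents
tend to `π/2`. As the integrand is nonnegative, it is integrable on `(0, ∞)` with integral
`F(∞) - F(0) = π/(4x)`.
-/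

lemma hasDerivAt_log_sq_add_sq_div_two {x : ℝ} (hx : x ≠ 0) (t : ℝ) :
    HasDerivAt (fun t => log (x ^ 2 + t ^ 2) / 2) (t / (x ^ 2 + t ^ 2)) t := by
  have h : x ^ 2 + t ^ 2 ≠ 0 := by positivity
  refine ((((hasDerivAt_pow 2 t).const_add (x ^ 2)).log h).div_const 2).congr_deriv ?_
  field_simp
  norm_num
  ring

lemma hasDerivAt_arctan_div_div {x : ℝ} (hx : x ≠ 0) (t : ℝ) :
    HasDerivAt (fun t => arctan (t / x) / x) (1 / (x ^ 2 + t ^ 2)) t := by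
  refine ((((hasDerivAt_id' t).div_const x).arctan).div_const x).congr_deriv ?_
  field_simp

lemma tendsto_log_sq_add_sub_sq_sub_log_sq_atTop (x a : ℝ) :
    Tendsto (fun η => log (x ^ 2 + (η - a) ^ 2) - log (η ^ 2)) atTop (𝓝 0) := by
  have hlim : Tendsto (fun η : ℝ => (x * η⁻¹) ^ 2 + (1 - a * η⁻¹) ^ 2) atTop (𝓝 1) := by
    simpa using ((tendsto_inv_atTop_zero.const_mul x).pow 2).add
      (((tendsto_inv_atTop_zero.const_mul a).const_sub 1).pow 2)
  have hlog := (continuousAt_log one_ne_zero).tendsto.comp hlim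
  rw [log_one] at hlog
  refine hlog.congr' ?_
  filter_upwards [eventually_gt_atTop 0, eventually_gt_atTop a] with η hη hηa
  have hη_sub : 0 < η - a := sub_pos.2 hηa
  rw [Function.comp_apply, ← log_div (by positivity) (by positivity)]
  congr 1
  field_simp

lemma tendsto_arctan_sub_div_div_atTop {x : ℝ} (hx : 0 < x) (a : ℝ) :
    Tendsto (fun η => arctan ((η - a) / x) / x) atTop (𝓝 (π / 2 / x)) :=
  ((tendsto_arctan_atTop.mono_right nhdsWithin_le_nhds).comp
    ((tendsto_atTop_add_const_right _ (-a) tendsto_id).atTop_div_const hx)).div_const x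

noncomputable def poissonLinPrimitive (x y η : ℝ) : ℝ :=
  (log (x ^ 2 + (η - y) ^ 2) / 2 - log (x ^ 2 + (η + y) ^ 2) / 2 +
    y * (arctan ((η - y) / x) / x + arctan ((η + y) / x) / x)) / (4 * y)

lemma hasDerivAt_poissonLinPrimitive {x y : ℝ} (hx : x ≠ 0) (hy : y ≠ 0) (η : ℝ) :
    HasDerivAt (poissonLinPrimitive x y)
      (η ^ 2 / ((x ^ 2 + (y + η) ^ 2) * (x ^ 2 + (y - η) ^ 2))) η := by
  have hL := (hasDerivAt_log_sq_add_sq_div_two hx (η - y)).comp_sub_const η y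
  have hL' := (hasDerivAt_log_sq_add_sq_div_two hx (η + y)).comp_add_const η y
  have hT := (hasDerivAt_arctan_div_div hx (η - y)).comp_sub_const η y
  have hT' := (hasDerivAt_arctan_div_div hx (η + y)).comp_add_const η y
  refine (((hL.sub hL').add ((hT.add hT').const_mul y)).div_const (4 * y)).congr_deriv ?_
  have hA : x ^ 2 + (η + y) ^ 2 ≠ 0 := by positivity
  have hB : x ^ 2 + (η - y) ^ 2 ≠ 0 := by positivity
  field_simp
  ring

lemma poissonLinPrimitive_zero (x y : ℝ) : poissonLinPrimitive x y 0 = 0 := by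
  simp [poissonLinPrimitive, neg_div, arctan_neg]

lemma tendsto_poissonLinPrimitive_atTop {x y : ℝ} (hx : 0 < x) (hy : y ≠ 0) :
    Tendsto (poissonLinPrimitive x y) atTop (𝓝 (π / (4 * x))) := by
  have hlog := ((tendsto_log_sq_add_sub_sq_sub_log_sq_atTop x y).sub
    (tendsto_log_sq_add_sub_sq_sub_log_sq_atTop x (-y))).div_const 2
  have hatan := (tendsto_arctan_sub_div_div_atTop hx y).add
    (tendsto_arctan_sub_div_div_atTop hx (-y))
  convert (hlog.add (hatan.const_mul y)).div_const (4 * y) using 1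
  · ext η
    simp only [poissonLinPrimitive, sub_neg_eq_add]
    ring
  · congr 1
    field_simp
    ring

/-- For all `x, y > 0`,
`(4xy/π) ∫_0^∞ η² / ((x² + (y+η)²)(x² + (y−η)²)) dη = y`. -/
theorem poisson_kernel_integral_lin (x y : ℝ) (hx : 0 < x) (hy : 0 < y) :
    4 * x * y / Real.pi *
        ∫ η in Ioi (0 : ℝ), η ^ 2 / ((x ^ 2 + (y + η) ^ 2) * (x ^ 2 + (y - η) ^ 2)) = y := by
  rw [integral_Ioi_of_hasDerivAt_of_nonneg'
    (fun η _ => hasDerivAt_poissonLinPrimitive hx.ne' hy.ne' η) (fun η _ => by positivity)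
    (tendsto_poissonLinPrimitive_atTop hx hy.ne'), poissonLinPrimitive_zero, sub_zero]
  field_simp
end
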